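/- For n ≥ 1, the n-th derivative of t/log(1+t) equals (1/(1+t)^n) Σ_{i=0}^{n} (-1)^i i! (t·S_1(n,i) + n(1+t)·S_1(n-1,i)) / (log(1+t))^{i+1}, with the convention S_1(n-1,n) = 0. -/

import Mathlib

/-- The signed Stirling numbers of the first kind, defined by
`(x)_m = Σ_k S_1(m,k) x^k` (so in particular `S_1(n-1,n) = 0`). -/
noncomputable def stirling1 (m k : ℕ) : ℝ :=
  (descPochhammer ℝ m).coeff k

lemma stirling1_eq_zero {m k : ℕ} (h : m < k) : stirling1 m k = 0 := by
  unfold stirling1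
  apply Polynomial.coeff_eq_zero_of_natDegree_lt
  rwa [descPochhammer_natDegree]

lemma stirling1_zero_of_ne {n : ℕ} (h : n ≠ 0) : stirling1 n 0 = 0 := by
  unfold stirling1
  rw [Polynomial.coeff_zero_eq_eval_zero]
  exact descPochhammer_ne_zero_eval_zero (R := ℝ) h

lemma stirling1_rec (n j : ℕ) :
    stirling1 (n + 1) (j + 1) = stirling1 n j - n * stirling1 n (j + 1) := by
  unfold stirling1
  rw [descPochhammer_succ_right, mul_sub, Polynomial.coeff_sub, Polynomial.coeff_mul_X,
    ← Polynomial.C_eq_natCast, Polynomial.coeff_mul_C]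
  ring

/-- Auxiliary: the explicit formula for the `n`-th derivative of `1/log(1+t)`. -/
noncomputable def G (n : ℕ) (t : ℝ) : ℝ :=
  (1 / (1 + t) ^ n) * ∑ i ∈ Finset.range (n + 1),
    stirling1 n i * (-1 : ℝ) ^ i * i.factorial / Real.log (1 + t) ^ (i + 1)

lemma hasDerivAt_G (n : ℕ) (t : ℝ) (ht : 0 < t) : HasDerivAt (G n) (G (n + 1) t) t := by
  have h1t : (0 : ℝ) < 1 + t := by linarith
  have haz : (1 + t) ≠ 0 := h1t.ne'
  have hLpos : 0 < Real.log (1 + t) := Real.log_pos (by linarith)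
  have hL : Real.log (1 + t) ≠ 0 := hLpos.ne'
  set L : ℝ := Real.log (1 + t) with hLdef
  -- rewrite G n as a finite sum of simple terms
  have hfun : G n = fun s : ℝ => ∑ i ∈ Finset.range (n + 1),
      stirling1 n i * (-1 : ℝ) ^ i * i.factorial *
        ((1 + s) ^ n * Real.log (1 + s) ^ (i + 1))⁻¹ := by
    funext s
    rw [G, Finset.mul_sum]
    refine Finset.sum_congr rfl fun i _ => ?_
    rw [mul_inv]
    ring
  rw [hfun]
  have ha : HasDerivAt (fun s : ℝ => 1 + s) 1 t := (hasDerivAt_id t).const_add 1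
  have hlog : HasDerivAt (fun s : ℝ => Real.log (1 + s)) (1 / (1 + t)) t := ha.log haz
  have Hterm : ∀ i ∈ Finset.range (n + 1),
      HasDerivAt (fun s : ℝ => stirling1 n i * (-1 : ℝ) ^ i * i.factorial *
          ((1 + s) ^ n * Real.log (1 + s) ^ (i + 1))⁻¹)
        (stirling1 n i * (-1 : ℝ) ^ i * i.factorial *
          (-((n : ℝ) * (1 + t) ^ (n - 1) * 1 * L ^ (i + 1) +
              (1 + t) ^ n * ((i + 1 : ℕ) * L ^ i * (1 / (1 + t)))) /
            ((1 + t) ^ n * L ^ (i + 1)) ^ 2)) t := by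
    intro i _
    have hden : (1 + t) ^ n * L ^ (i + 1) ≠ 0 := by positivity
    exact ((ha.pow n).mul (hlog.pow (i + 1))).inv hden |>.const_mul _
  have Hsum := HasDerivAt.sum Hterm
  convert Hsum using 1
  · rfl
  · rfl
  · ext s
    simp [Finset.sum_apply]
  -- now show the sum of derivatives equals G (n+1) t
  -- step 1: per-term simplification
  have hstep : ∀ i ∈ Finset.range (n + 1),
      stirling1 n i * (-1 : ℝ) ^ i * i.factorial *
          (-((n : ℝ) * (1 + t) ^ (n - 1) * 1 * L ^ (i + 1) +
              (1 + t) ^ n * ((i + 1 : ℕ) * L ^ i * (1 / (1 + t)))) /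
            ((1 + t) ^ n * L ^ (i + 1)) ^ 2) =
        (1 / (1 + t) ^ (n + 1)) *
          (stirling1 n i * (-1 : ℝ) ^ i * i.factorial * (-(n : ℝ)) / L ^ (i + 1) +
           stirling1 n i * (-1 : ℝ) ^ i * i.factorial * (-((i : ℝ) + 1)) / L ^ (i + 2)) := by
    intro i _
    rcases n with _ | k
    · push_cast
      field_simp
      ring
    · have hpow : ((k + 1 : ℕ) : ℝ) * (1 + t) ^ (k + 1 - 1) * (1 + t) =
          ((k + 1 : ℕ) : ℝ) * (1 + t) ^ (k + 1) := by
        rw [Nat.add_sub_cancel, mul_assoc, ← pow_succ]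
      push_cast at hpow ⊢
      field_simp
      ring
  rw [Finset.sum_congr rfl hstep, ← Finset.mul_sum, G]
  congr 1
  rw [Finset.sum_add_distrib]
  -- reindex the target sum
  rw [Finset.sum_range_succ' (fun j => stirling1 (n+1) j * (-1:ℝ)^j * j.factorial / L ^ (j+1)) (n+1)]
  have h00 : stirling1 (n + 1) 0 * (-1 : ℝ) ^ 0 * Nat.factorial 0 / L ^ (0 + 1) = 0 := by
    simp [stirling1_zero_of_ne (Nat.succ_ne_zero n)]
  rw [h00, add_zero]
  -- reindex the first sum on the LHS
  rw [Finset.sum_range_succ' (fun i => stirling1 n i * (-1:ℝ)^i * i.factorial * (-(n:ℝ)) / L ^ (i+1)) n]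
  have h01 : stirling1 n 0 * (-1 : ℝ) ^ 0 * Nat.factorial 0 * (-(n : ℝ)) / L ^ (0 + 1) = 0 := by
    rcases Nat.eq_zero_or_pos n with h | h
    · simp [h]
    · simp [stirling1_zero_of_ne h.ne']
  rw [h01, add_zero]
  -- extend range n to range (n+1) with a zero term
  rw [show (∑ i ∈ Finset.range n,
        stirling1 n (i+1) * (-1:ℝ)^(i+1) * (i+1).factorial * (-(n:ℝ)) / L ^ (i+1+1)) =
      ∑ i ∈ Finset.range (n+1),
        stirling1 n (i+1) * (-1:ℝ)^(i+1) * (i+1).factorial * (-(n:ℝ)) / L ^ (i+1+1) by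
    rw [Finset.sum_range_succ, stirling1_eq_zero (Nat.lt_succ_self n)]
    simp]
  rw [← Finset.sum_add_distrib]
  refine Finset.sum_congr rfl fun i _ => ?_
  rw [stirling1_rec n i, Nat.factorial_succ]
  have : (i : ℕ) + 1 + 1 = i + 2 := rfl
  rw [this, ← add_div]
  congr 1
  push_cast
  ring

lemma iteratedDeriv_inv_log (n : ℕ) : ∀ t : ℝ, 0 < t →
    iteratedDeriv n (fun s : ℝ => 1 / Real.log (1 + s)) t = G n t := by
  induction n with
  | zero =>
    intro t ht
    have h1 : stirling1 0 0 = 1 := by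
      unfold stirling1; simp [descPochhammer_zero]
    simp [iteratedDeriv_zero, G, h1]
  | succ n ih =>
    intro t ht
    rw [iteratedDeriv_succ]
    have hev : iteratedDeriv n (fun s : ℝ => 1 / Real.log (1 + s)) =ᶠ[nhds t] G n := by
      filter_upwards [eventually_gt_nhds ht] with s hs using ih s hs
    rw [hev.deriv_eq]
    exact (hasDerivAt_G n t ht).deriv

lemma leibniz_form (n : ℕ) : ∀ t : ℝ, 0 < t →
    iteratedDeriv n (fun s : ℝ => s / Real.log (1 + s)) t =
      t * G n t + n * G (n - 1) t := by
  induction n with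
  | zero =>
    intro t ht
    have h1 : stirling1 0 0 = 1 := by
      unfold stirling1; simp [descPochhammer_zero]
    simp [iteratedDeriv_zero, G, h1]
    ring
  | succ n ih =>
    intro t ht
    rw [iteratedDeriv_succ]
    have hev : iteratedDeriv n (fun s : ℝ => s / Real.log (1 + s)) =ᶠ[nhds t]
        fun s => s * G n s + n * G (n - 1) s := by
      filter_upwards [eventually_gt_nhds ht] with s hs using ih s hs
    rw [hev.deriv_eq]
    have hd : HasDerivAt (fun s : ℝ => s * G n s + n * G (n - 1) s)
        (1 * G n t + t * G (n + 1) t + (n : ℝ) * G (n - 1 + 1) t) t :=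
      ((hasDerivAt_id t).mul (hasDerivAt_G n t ht)).add
        ((hasDerivAt_G (n - 1) t ht).const_mul (n : ℝ))
    rw [hd.deriv]
    rcases n with _ | k
    · norm_num
      ring
    · rw [Nat.add_sub_cancel]
      push_cast
      ring

/-- For `n ≥ 1` and `t > 0`:
`(t/log(1+t))^{(n)} = (1/(1+t)^n) Σ_{i=0}^n (-1)^i i! (t S_1(n,i) + n(1+t) S_1(n-1,i)) /
(log(1+t))^{i+1}`. -/
theorem stmt17 (n : ℕ) (hn : 1 ≤ n) (t : ℝ) (ht : 0 < t) :
    iteratedDeriv n (fun s : ℝ => s / Real.log (1 + s)) t =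
      (1 / (1 + t) ^ n) * ∑ i ∈ Finset.range (n + 1),
        (-1 : ℝ) ^ i * i.factorial *
          (t * stirling1 n i + n * (1 + t) * stirling1 (n - 1) i) /
            Real.log (1 + t) ^ (i + 1) := by
  obtain ⟨m, rfl⟩ : ∃ m, n = m + 1 := ⟨n - 1, (Nat.succ_pred_eq_of_pos hn).symm⟩
  rw [leibniz_form (m + 1) t ht, Nat.add_sub_cancel]
  have h1t : (0 : ℝ) < 1 + t := by linarith
  have haz : (1 + t) ≠ 0 := h1t.ne'
  have hL : Real.log (1 + t) ≠ 0 := (Real.log_pos (by linarith)).ne'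
  rw [G, G]
  have hext : (∑ i ∈ Finset.range (m + 1),
        stirling1 m i * (-1 : ℝ) ^ i * i.factorial / Real.log (1 + t) ^ (i + 1)) =
      ∑ i ∈ Finset.range (m + 2),
        stirling1 m i * (-1 : ℝ) ^ i * i.factorial / Real.log (1 + t) ^ (i + 1) := by
    refine Finset.sum_subset (Finset.range_subset_range.2 (by omega)) fun x hx hnx => ?_
    have hxm : m < x := by
      simp only [Finset.mem_range] at hx hnx
      omega
    rw [stirling1_eq_zero hxm]
    simp
  rw [hext]
  simp only [Finset.mul_sum]
  rw [← Finset.sum_add_distrib]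
  refine Finset.sum_congr rfl fun i _ => ?_
  field_simp
  ring
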